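/- Let K be a finite extension of ℚ_p with valuation ring R and uniformizer π, m > 1, and β ∈ K^(k̄) for some k̄ > 0. Let ν_i ∈ ℤ for i = 2,…,m−1. Define D = {(x₂,…,x_m) ∈ ∏ R^(k̄) : v(β ∏_{i=2}^{m−1} x_i^{ν_i}) ≤ v(x_m)} and E = {x ∈ ∏_{i=1}^m R^(k̄) : v(β ∏_{i=2}^{m−1} x_i^{ν_i}) ≤ v(x_m) ≤ v(β x₁ ∏_{i=2}^{m−1} x_i^{ν_i})}. Then the map (x₁,…,x_m) ↦ (x₁ x_m / (β ∏_{i=2}^{m−1} x_i^{ν_i}), x₂, …, x_m) is a bijection from R^(k̄) × D onto E. -/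

import Mathlib

/-- A normalized discrete valuation (with values in `WithTop ℤ`) on a finite extension `K`
of `ℚ_p`, compatible with the `p`-adic valuation up to a ramification index. -/
structure PadicStructure (p : ℕ) [Fact p.Prime] (K : Type*) [Field K] [Algebra ℚ_[p] K]
    [FiniteDimensional ℚ_[p] K] where
  v : K → WithTop ℤ
  v_zero : v 0 = ⊤
  v_ne_top : ∀ {x : K}, x ≠ 0 → v x ≠ ⊤
  v_mul : ∀ x y : K, v (x * y) = v x + v y
  v_add : ∀ x y : K, min (v x) (v y) ≤ v (x + y)
  ramification : ∃ e : ℕ, 0 < e ∧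
    ∀ x : ℚ_[p], x ≠ 0 → v (algebraMap ℚ_[p] K x) = (((e : ℤ) * x.valuation : ℤ) : WithTop ℤ)

namespace PadicStructure

variable {p : ℕ} [Fact p.Prime] {K : Type*} [Field K] [Algebra ℚ_[p] K]
  [FiniteDimensional ℚ_[p] K] (V : PadicStructure p K)

/-- The valuation ring `R = {x : v x ≥ 0}`. -/
def R : Set K := {x | 0 ≤ V.v x}

/-- `P n`, the set of nonzero `n`-th powers of `K`. -/
def P (_W : PadicStructure p K) (n : ℕ) : Set K := {x | x ≠ 0 ∧ ∃ y : K, y ^ n = x}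

/-- `X^(k)`: elements `x ≠ 0` of `X` with `v (π ^ (-v x) * x - 1) ≥ k`. -/
def shift (π : K) (X : Set K) (k : ℕ) : Set K :=
  {x | x ∈ X ∧ x ≠ 0 ∧ ∀ s : ℤ, V.v x = (s : WithTop ℤ) →
    ((k : ℤ) : WithTop ℤ) ≤ V.v (π ^ (-s) * x - 1)}

/-- `K^(k)`. -/
def Kshift (π : K) (k : ℕ) : Set K := V.shift π Set.univ k

end PadicStructure

/-- Semi-algebraic subsets of `K^m`: Boolean combinations of sets `{x : f x ∈ P n}`. -/
inductive IsSA (K : Type*) [Field K] : {m : ℕ} → Set (Fin m → K) → Prop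
  | basic {m : ℕ} (f : MvPolynomial (Fin m) K) (n : ℕ) (hn : 0 < n) :
      IsSA K {x | MvPolynomial.eval x f ≠ 0 ∧ ∃ y : K, y ^ n = MvPolynomial.eval x f}
  | compl {m : ℕ} {A : Set (Fin m → K)} : IsSA K A → IsSA K Aᶜ
  | union {m : ℕ} {A B : Set (Fin m → K)} : IsSA K A → IsSA K B → IsSA K (A ∪ B)

/-- A semi-algebraic bijection (isomorphism) between `X ⊆ K^n` and `Y ⊆ K^m`:
a bijection whose graph is semi-algebraic. -/
def SAIso (K : Type*) [Field K] {n m : ℕ} (X : Set (Fin n → K)) (Y : Set (Fin m → K)) : Prop :=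
  ∃ f : (Fin n → K) → (Fin m → K), Set.BijOn f X Y ∧
    IsSA K {z : Fin (n + m) → K |
      (fun i => z (Fin.castAdd m i)) ∈ X ∧
      f (fun i => z (Fin.castAdd m i)) = fun j => z (Fin.natAdd n j)}

/-! For `k > 0` the principal units `{u : k ≤ v (u - 1)}` are closed under products and inverses,
and `x ↦ π ^ (-v x) * x` is multiplicative, so `K^(k)` is a group. Writing `B` for
`β ∏ x_i ^ ν_i`, which does not involve the first coordinate, the candidate inverse is
`y ↦ (y₁ B / y_m, y₂, …, y_m)`; both maps preserve `K^(k)` coordinatewise, and the new first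
coordinate is integral because its product with `B` (resp. `y_m`) is `x₁ x_m` (resp. `y₁ B`),
whose valuation dominates `v B` (resp. `v y_m`) by the defining inequalities of `D` and `E`. -/

open Function Set

namespace AddValuation

variable {R K Γ₀ : Type*}

section Monoid

variable [Ring R] [LinearOrderedAddCommMonoidWithTop Γ₀] (v : AddValuation R Γ₀) {c : Γ₀}

theorem map_eq_zero_of_le_map_sub_one (hc : 0 < c) {u : R} (hu : c ≤ v (u - 1)) : v u = 0 :=
  v.map_one ▸ v.map_eq_of_lt_sub (v.map_one ▸ hc.trans_le hu)

theorem le_map_mul_sub_one (hc : 0 < c) {a b : R} (ha : c ≤ v (a - 1)) (hb : c ≤ v (b - 1)) :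
    c ≤ v (a * b - 1) := by
  have hab : a * b - 1 = a * (b - 1) + (a - 1) := by
    rw [mul_sub, mul_one, sub_add_sub_cancel]
  rw [hab]
  refine v.map_le_add ?_ ha
  rwa [v.map_mul, v.map_eq_zero_of_le_map_sub_one hc ha, zero_add]

theorem nonneg_of_map_le_map_mul {a b : R} (hb : v b ≠ ⊤) (h : v b ≤ v (a * b)) : 0 ≤ v a := by
  rw [v.map_mul] at h
  rwa [← add_le_add_iff_left_of_ne_top hb, zero_add]

end Monoid

theorem le_map_inv_sub_one [Field K] [LinearOrderedAddCommGroupWithTop Γ₀] (v : AddValuation K Γ₀)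
    {c : Γ₀} (hc : 0 < c) {a : K} (ha : c ≤ v (a - 1)) : c ≤ v (a⁻¹ - 1) := by
  have ha0 : a ≠ 0 := by
    rintro rfl
    simpa [v.map_zero] using v.map_eq_zero_of_le_map_sub_one hc ha
  have h : a⁻¹ - 1 = a⁻¹ * -(a - 1) := by
    rw [mul_neg, mul_sub, inv_mul_cancel₀ ha0, mul_one, neg_sub]
  rwa [h, v.map_mul, v.map_neg, v.map_inv, v.map_eq_zero_of_le_map_sub_one hc ha, neg_zero,
    zero_add]

end AddValuation

namespace PadicStructure

variable {p : ℕ} [Fact p.Prime] {K : Type*} [Field K] [Algebra ℚ_[p] K]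
  [FiniteDimensional ℚ_[p] K] (V : PadicStructure p K) {π : K} {k : ℕ}

theorem exists_v_eq {x : K} (hx : x ≠ 0) : ∃ a : ℤ, V.v x = a :=
  WithTop.ne_top_iff_exists.mp (V.v_ne_top hx) |>.imp fun _ h => h.symm

theorem v_one : V.v 1 = 0 := by
  obtain ⟨a, ha⟩ := V.exists_v_eq one_ne_zero
  have h := V.v_mul 1 1
  rw [mul_one, ha, ← WithTop.coe_add, WithTop.coe_inj] at h
  rw [ha, WithTop.coe_eq_zero]
  omega

def toAddValuation : AddValuation K (WithTop ℤ) :=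
  AddValuation.of V.v V.v_zero V.v_one V.v_add V.v_mul

theorem toAddValuation_apply (x : K) : V.toAddValuation x = V.v x := rfl

theorem ne_zero_of_mem_Kshift {x : K} (hx : x ∈ V.Kshift π k) : x ≠ 0 := hx.2.1

theorem mem_Kshift_iff_of_v_eq {x : K} (hx : x ≠ 0) {a : ℤ} (ha : V.v x = a) :
    x ∈ V.Kshift π k ↔ ((k : ℤ) : WithTop ℤ) ≤ V.v (π ^ (-a) * x - 1) := by
  refine ⟨fun h => h.2.2 a ha, fun h => ⟨mem_univ x, hx, fun s hs => ?_⟩⟩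
  obtain rfl : s = a := WithTop.coe_inj.mp (hs.symm.trans ha)
  exact h

theorem mem_shift_R_iff {x : K} : x ∈ V.shift π V.R k ↔ x ∈ V.Kshift π k ∧ 0 ≤ V.v x := by
  simp only [Kshift, shift, R, mem_ofPred_eq, mem_univ, true_and]
  tauto

theorem one_mem_Kshift : (1 : K) ∈ V.Kshift π k := by
  rw [V.mem_Kshift_iff_of_v_eq one_ne_zero (a := 0) V.v_one]
  simp [V.v_zero]

theorem mul_mem_Kshift (hπ : π ≠ 0) (hk : 0 < k) {x y : K} (hx : x ∈ V.Kshift π k)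
    (hy : y ∈ V.Kshift π k) : x * y ∈ V.Kshift π k := by
  have hx0 := V.ne_zero_of_mem_Kshift hx
  have hy0 := V.ne_zero_of_mem_Kshift hy
  obtain ⟨a, ha⟩ := V.exists_v_eq hx0
  obtain ⟨b, hb⟩ := V.exists_v_eq hy0
  have hab : V.v (x * y) = ((a + b : ℤ) : WithTop ℤ) := by rw [V.v_mul, ha, hb]; rfl
  rw [V.mem_Kshift_iff_of_v_eq hx0 ha] at hx
  rw [V.mem_Kshift_iff_of_v_eq hy0 hb] at hy
  rw [V.mem_Kshift_iff_of_v_eq (mul_ne_zero hx0 hy0) hab, neg_add, zpow_add₀ hπ,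
    mul_mul_mul_comm]
  exact V.toAddValuation.le_map_mul_sub_one (by exact_mod_cast hk) hx hy

theorem inv_mem_Kshift (hk : 0 < k) {x : K} (hx : x ∈ V.Kshift π k) :
    x⁻¹ ∈ V.Kshift π k := by
  have hx0 := V.ne_zero_of_mem_Kshift hx
  obtain ⟨a, ha⟩ := V.exists_v_eq hx0
  have ha' : V.v x⁻¹ = ((-a : ℤ) : WithTop ℤ) := by
    rw [← V.toAddValuation_apply, AddValuation.map_inv, V.toAddValuation_apply, ha]; rfl
  rw [V.mem_Kshift_iff_of_v_eq hx0 ha] at hx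
  rw [V.mem_Kshift_iff_of_v_eq (inv_ne_zero hx0) ha', neg_neg,
    show π ^ a * x⁻¹ = (π ^ (-a) * x)⁻¹ by rw [mul_inv, zpow_neg, inv_inv]]
  exact V.toAddValuation.le_map_inv_sub_one (by exact_mod_cast hk) hx

theorem div_mem_Kshift (hπ : π ≠ 0) (hk : 0 < k) {x y : K} (hx : x ∈ V.Kshift π k)
    (hy : y ∈ V.Kshift π k) : x / y ∈ V.Kshift π k :=
  div_eq_mul_inv x y ▸ V.mul_mem_Kshift hπ hk hx (V.inv_mem_Kshift hk hy)

theorem zpow_mem_Kshift (hπ : π ≠ 0) (hk : 0 < k) {x : K} (hx : x ∈ V.Kshift π k) (n : ℤ) :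
    x ^ n ∈ V.Kshift π k := by
  have hx0 := V.ne_zero_of_mem_Kshift hx
  induction n using Int.induction_on with
  | zero => simpa using V.one_mem_Kshift
  | succ n ih => rw [zpow_add_one₀ hx0]; exact V.mul_mem_Kshift hπ hk ih hx
  | pred n ih => rw [zpow_sub_one₀ hx0, ← div_eq_mul_inv]; exact V.div_mem_Kshift hπ hk ih hx

theorem prod_mem_Kshift (hπ : π ≠ 0) (hk : 0 < k) {ι : Type*} {s : Finset ι} {f : ι → K}
    (hf : ∀ i ∈ s, f i ∈ V.Kshift π k) : ∏ i ∈ s, f i ∈ V.Kshift π k :=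
  Finset.prod_induction f (· ∈ V.Kshift π k) (fun _ _ => V.mul_mem_Kshift hπ hk)
    V.one_mem_Kshift hf

end PadicStructure

section

variable {K ι : Type*} [Field K] [DecidableEq ι] {B : (ι → K) → K} {i₀ iₘ : ι}

theorem invOn_update_mul_div (hB : ∀ x c, B (update x i₀ c) = B x) (hne : iₘ ≠ i₀) :
    InvOn (fun y => update y i₀ (y i₀ * B y / y iₘ)) (fun x => update x i₀ (x i₀ * x iₘ / B x))
      {x | B x ≠ 0 ∧ x iₘ ≠ 0} {y | B y ≠ 0 ∧ y iₘ ≠ 0} := by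
  constructor
  · rintro x ⟨hB0, hM0⟩
    simp only [hB, update_self, update_of_ne hne, update_idem]
    rw [div_mul_cancel₀ _ hB0, mul_div_cancel_right₀ _ hM0, update_eq_self]
  · rintro y ⟨hB0, hM0⟩
    simp only [hB, update_self, update_of_ne hne, update_idem]
    rw [div_mul_cancel₀ _ hM0, mul_div_cancel_right₀ _ hB0, update_eq_self]

end

namespace PadicStructure

variable {p : ℕ} [Fact p.Prime] {K : Type*} [Field K] [Algebra ℚ_[p] K]
  [FiniteDimensional ℚ_[p] K] (V : PadicStructure p K) {π : K} {k : ℕ}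
  {ι : Type*} [DecidableEq ι] {B : (ι → K) → K} {i₀ iₘ : ι}

theorem mapsTo_update_mul_div (hπ : π ≠ 0) (hk : 0 < k)
    (hB : ∀ x, (∀ i, x i ∈ V.Kshift π k) → B x ∈ V.Kshift π k)
    (hB_update : ∀ x c, B (update x i₀ c) = B x) (hne : iₘ ≠ i₀) :
    MapsTo (fun x => update x i₀ (x i₀ * x iₘ / B x))
      {x | (∀ i, x i ∈ V.shift π V.R k) ∧ V.v (B x) ≤ V.v (x iₘ)}
      {x | (∀ i, x i ∈ V.shift π V.R k) ∧ V.v (B x) ≤ V.v (x iₘ) ∧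
        V.v (x iₘ) ≤ V.v (x i₀ * B x)} := by
  rintro x ⟨hx, hBM⟩
  have hxK i : x i ∈ V.Kshift π k := (V.mem_shift_R_iff.mp (hx i)).1
  have hB0 : B x ≠ 0 := V.ne_zero_of_mem_Kshift (hB x hxK)
  have hc : x i₀ * x iₘ / B x * B x = x i₀ * x iₘ := div_mul_cancel₀ _ hB0
  have hM_le : V.v (x iₘ) ≤ V.v (x i₀ * x iₘ) := by
    rw [V.v_mul]
    exact le_add_of_nonneg_left (V.mem_shift_R_iff.mp (hx i₀)).2
  simp only [mem_ofPred_eq, hB_update, update_self, update_of_ne hne, hc]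
  refine ⟨(forall_update_iff x fun _ y => y ∈ V.shift π V.R k).mpr ⟨?_, fun i _ => hx i⟩,
    hBM, hM_le⟩
  refine V.mem_shift_R_iff.mpr
    ⟨V.div_mem_Kshift hπ hk (V.mul_mem_Kshift hπ hk (hxK i₀) (hxK iₘ)) (hB x hxK), ?_⟩
  exact V.toAddValuation.nonneg_of_map_le_map_mul (V.v_ne_top hB0) <| by
    rw [toAddValuation_apply, toAddValuation_apply, hc]
    exact hBM.trans hM_le

theorem mapsTo_update_mul_div_symm (hπ : π ≠ 0) (hk : 0 < k)
    (hB : ∀ x, (∀ i, x i ∈ V.Kshift π k) → B x ∈ V.Kshift π k)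
    (hB_update : ∀ x c, B (update x i₀ c) = B x) (hne : iₘ ≠ i₀) :
    MapsTo (fun y => update y i₀ (y i₀ * B y / y iₘ))
      {y | (∀ i, y i ∈ V.shift π V.R k) ∧ V.v (B y) ≤ V.v (y iₘ) ∧
        V.v (y iₘ) ≤ V.v (y i₀ * B y)}
      {y | (∀ i, y i ∈ V.shift π V.R k) ∧ V.v (B y) ≤ V.v (y iₘ)} := by
  rintro y ⟨hy, hBM, hMB⟩
  have hyK i : y i ∈ V.Kshift π k := (V.mem_shift_R_iff.mp (hy i)).1
  have hM0 : y iₘ ≠ 0 := V.ne_zero_of_mem_Kshift (hyK iₘ)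
  have hd : y i₀ * B y / y iₘ * y iₘ = y i₀ * B y := div_mul_cancel₀ _ hM0
  simp only [mem_ofPred_eq, hB_update, update_of_ne hne]
  refine ⟨(forall_update_iff y fun _ z => z ∈ V.shift π V.R k).mpr ⟨?_, fun i _ => hy i⟩, hBM⟩
  refine V.mem_shift_R_iff.mpr
    ⟨V.div_mem_Kshift hπ hk (V.mul_mem_Kshift hπ hk (hyK i₀) (hB y hyK)) (hyK iₘ), ?_⟩
  exact V.toAddValuation.nonneg_of_map_le_map_mul (V.v_ne_top hM0) <| by
    rwa [toAddValuation_apply, toAddValuation_apply, hd]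

theorem bijOn_update_mul_div (hπ : π ≠ 0) (hk : 0 < k)
    (hB : ∀ x, (∀ i, x i ∈ V.Kshift π k) → B x ∈ V.Kshift π k)
    (hB_update : ∀ x c, B (update x i₀ c) = B x) (hne : iₘ ≠ i₀) :
    BijOn (fun x => update x i₀ (x i₀ * x iₘ / B x))
      {x | (∀ i, x i ∈ V.shift π V.R k) ∧ V.v (B x) ≤ V.v (x iₘ)}
      {x | (∀ i, x i ∈ V.shift π V.R k) ∧ V.v (B x) ≤ V.v (x iₘ) ∧
        V.v (x iₘ) ≤ V.v (x i₀ * B x)} := by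
  have hne_zero x (hx : ∀ i, x i ∈ V.shift π V.R k) : B x ≠ 0 ∧ x iₘ ≠ 0 := by
    have hxK i : x i ∈ V.Kshift π k := (V.mem_shift_R_iff.mp (hx i)).1
    exact ⟨V.ne_zero_of_mem_Kshift (hB x hxK), V.ne_zero_of_mem_Kshift (hxK iₘ)⟩
  exact ((invOn_update_mul_div hB_update hne).mono (fun x hx => hne_zero x hx.1)
    (fun y hy => hne_zero y hy.1)).bijOn (V.mapsTo_update_mul_div hπ hk hB hB_update hne)
    (V.mapsTo_update_mul_div_symm hπ hk hB hB_update hne)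

end PadicStructure

/-- The Presburger-style map `(x₁,…,x_m) ↦ (x₁ x_m / (β ∏ x_i^{ν_i}), x₂, …, x_m)`
is a bijection from `R^(k̄) × D` onto `E`. -/
theorem presburger_bijOn {p : ℕ} [Fact p.Prime] {K : Type*} [Field K] [Algebra ℚ_[p] K]
    [FiniteDimensional ℚ_[p] K] (V : PadicStructure p K)
    (π : K) (hπ : V.v π = ((1 : ℤ) : WithTop ℤ)) (m : ℕ) (hm : 1 < m)
    (kb : ℕ) (hkb : 0 < kb) (β : K) (hβ : β ∈ V.Kshift π kb) (ν : Fin m → ℤ) :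
    Set.BijOn
      (fun x : Fin m → K => Function.update x (⟨0, by omega⟩ : Fin m)
        (x ⟨0, by omega⟩ * x ⟨m - 1, by omega⟩ /
          (β * ∏ i ∈ Finset.univ.filter (fun i : Fin m => 0 < (i : ℕ) ∧ (i : ℕ) < m - 1),
            x i ^ ν i)))
      {x : Fin m → K | (∀ i, x i ∈ V.shift π V.R kb) ∧
        V.v (β * ∏ i ∈ Finset.univ.filter (fun i : Fin m => 0 < (i : ℕ) ∧ (i : ℕ) < m - 1),
            x i ^ ν i)
          ≤ V.v (x ⟨m - 1, by omega⟩)}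
      {x : Fin m → K | (∀ i, x i ∈ V.shift π V.R kb) ∧
        V.v (β * ∏ i ∈ Finset.univ.filter (fun i : Fin m => 0 < (i : ℕ) ∧ (i : ℕ) < m - 1),
            x i ^ ν i)
          ≤ V.v (x ⟨m - 1, by omega⟩) ∧
        V.v (x ⟨m - 1, by omega⟩)
          ≤ V.v (x ⟨0, by omega⟩ *
            (β * ∏ i ∈ Finset.univ.filter (fun i : Fin m => 0 < (i : ℕ) ∧ (i : ℕ) < m - 1),
              x i ^ ν i))} := by
  have hπ0 : π ≠ 0 := by
    rintro rfl
    simp [V.v_zero] at hπ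
  refine V.bijOn_update_mul_div hπ0 hkb (fun x hx => ?_) (fun x c => ?_) ?_
  · exact V.mul_mem_Kshift hπ0 hkb hβ <| V.prod_mem_Kshift hπ0 hkb fun i _ =>
      V.zpow_mem_Kshift hπ0 hkb (hx i) (ν i)
  · refine congrArg (β * ·) (Finset.prod_congr rfl fun i hi => ?_)
    rw [update_of_ne]
    simp only [Finset.mem_filter] at hi
    exact Fin.ne_of_val_ne hi.2.1.ne'
  · simp only [ne_eq, Fin.mk.injEq]
    omega
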